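/- arXiv:2508.02164 — 4 statements merged into one kernel-verified Lean document; each statement's English description precedes it below -/
import Mathlib

section
/- (Proposition 2) Let the buffer be ω = 0 and let (x̂′, ŷ, δ̂, λ̂, x̂) be a fixed point of the DanyRA updates with stepsizes α, β, η, γ > 0 (in particular η > 0 and 0 < γ). Then x̂ = x̂′ and the KKT conditions of the reformulated problem hold: ∇f(x̂) + Aᵀλ̂ = 0, 𝐋λ̂ = 0, δ̂ ⪰ 0, λ̂ ⪰ 0, λ̂ᵀδ̂ = 0, and A x̂ + 𝐋 ŷ + δ̂ − d = 0. -/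
set_option autoImplicit false

open scoped BigOperators

noncomputable section

/-- Block-diagonal action `A x` of the stacked matrix `A = blkdiag(A_1,…,A_n)`. -/
def Amul {n m p : ℕ} (A : Fin n → Matrix (Fin m) (Fin p) ℝ)
    (x : EuclideanSpace ℝ (Fin n × Fin p)) : EuclideanSpace ℝ (Fin n × Fin m) :=
  WithLp.toLp 2 (fun q : Fin n × Fin m => ∑ k : Fin p, A q.1 q.2 k * x (q.1, k))

/-- Action of the transpose `Aᵀ v` of the stacked block-diagonal matrix. -/
def ATmul {n m p : ℕ} (A : Fin n → Matrix (Fin m) (Fin p) ℝ)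
    (v : EuclideanSpace ℝ (Fin n × Fin m)) : EuclideanSpace ℝ (Fin n × Fin p) :=
  WithLp.toLp 2 (fun q : Fin n × Fin p => ∑ j : Fin m, A q.1 j q.2 * v (q.1, j))

/-- Action of `𝐋 = 𝓛 ⊗ I_m` on a stacked vector `u ∈ ℝ^{nm}`. -/
def Lmul {n m : ℕ} (L : Matrix (Fin n) (Fin n) ℝ)
    (u : EuclideanSpace ℝ (Fin n × Fin m)) : EuclideanSpace ℝ (Fin n × Fin m) :=
  WithLp.toLp 2 (fun q : Fin n × Fin m => ∑ l : Fin n, L q.1 l * u (l, q.2))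

/-- The stacked objective `f(x) = ∑ i f_i(x_i)`. -/
def stackF {n p : ℕ} (f : Fin n → EuclideanSpace ℝ (Fin p) → ℝ)
    (x : EuclideanSpace ℝ (Fin n × Fin p)) : ℝ :=
  ∑ i : Fin n, f i (WithLp.toLp 2 (fun k => x (i, k)))

/-! With `ω = 0` the fixed-point equations force `ẑ = d`: the stationarity condition gives
`Aᵀλ̂ + ∇f(x̂′) = -Aᵀ(ẑ - d)`, so the λ-update reads `ẑ - d = -η A Aᵀ (ẑ - d)`, and pairing with
`ẑ - d` yields `‖ẑ - d‖² = -η ‖Aᵀ(ẑ - d)‖² ≤ 0`. Then `ẑ - d + λ̂ = λ̂`, which turns the remaining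
fixed-point equations into the KKT conditions; the δ-update `max{δ̂ - αλ̂, 0} = δ̂` is exactly
complementarity. Since `γ > 0`, the projection step forces `A x̂ + 𝐋ŷ + δ̂ = d = ẑ`, so `A x̂ = A x̂′`:
then `x̂′` lies in the affine set onto which `x̂` is the projection of `x̂′`, whence `x̂ = x̂′`. -/

section Adjoint

variable {n m p : ℕ} (A : Fin n → Matrix (Fin m) (Fin p) ℝ)

theorem inner_Amul_left (x : EuclideanSpace ℝ (Fin n × Fin p))
    (u : EuclideanSpace ℝ (Fin n × Fin m)) :
    inner ℝ (Amul A x) u = inner ℝ x (ATmul A u) := by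
  simp only [Amul, ATmul, PiLp.inner_apply, RCLike.inner_apply, conj_trivial,
    Fintype.sum_prod_type, Finset.sum_mul, Finset.mul_sum]
  refine Finset.sum_congr rfl fun i _ => ?_
  rw [Finset.sum_comm]
  exact Finset.sum_congr rfl fun j _ => Finset.sum_congr rfl fun k _ => by ring

theorem Amul_neg (x : EuclideanSpace ℝ (Fin n × Fin p)) : Amul A (-x) = -Amul A x := by
  ext q
  simp [Amul, Finset.sum_neg_distrib]

theorem ATmul_add (u v : EuclideanSpace ℝ (Fin n × Fin m)) :
    ATmul A (u + v) = ATmul A u + ATmul A v := by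
  ext q
  simp [ATmul, mul_add, Finset.sum_add_distrib]

end Adjoint

theorem eq_zero_of_eq_neg_smul_comp_adjoint {E F : Type*}
    [NormedAddCommGroup E] [InnerProductSpace ℝ E] [NormedAddCommGroup F] [InnerProductSpace ℝ F]
    (T : E → F) (S : F → E) (hTS : ∀ x u, inner ℝ (T x) u = inner ℝ x (S u))
    {η : ℝ} (hη : 0 ≤ η) {s : F} (hs : s = -(η • T (S s))) : s = 0 := by
  have hss : inner ℝ s s = -(η * inner ℝ (S s) (S s)) :=
    calc inner ℝ s s = inner ℝ (-(η • T (S s))) s := by rw [← hs]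
      _ = -(η * inner ℝ (S s) (S s)) := by rw [inner_neg_left, real_inner_smul_left, hTS]
  have hnonpos : inner ℝ s s ≤ 0 := by
    rw [hss]
    exact neg_nonpos.mpr (mul_nonneg hη real_inner_self_nonneg)
  exact inner_self_eq_zero.mp (le_antisymm hnonpos real_inner_self_nonneg)

theorem complementary_of_max_sub_mul_eq {a b α : ℝ} (hα : 0 < α)
    (h : max (a - α * b) 0 = a) : 0 ≤ a ∧ 0 ≤ b ∧ b * a = 0 := by
  have ha : 0 ≤ a := h ▸ le_max_right _ _
  have hb : 0 ≤ b := by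
    have : a - α * b ≤ a := by simpa only [h] using le_max_left (a - α * b) 0
    exact nonneg_of_mul_nonneg_right (by linarith) hα
  refine ⟨ha, hb, ?_⟩
  rcases le_total (a - α * b) 0 with hle | hle
  · rw [max_eq_right hle] at h
    rw [← h, mul_zero]
  · rw [max_eq_left hle] at h
    have : b = 0 := (mul_eq_zero.mp (by linarith : α * b = 0)).resolve_left hα.ne'
    rw [this, zero_mul]

theorem complementary_of_max_sub_smul_eq {ι : Type*} [Fintype ι] {δ μ : EuclideanSpace ℝ ι}
    {α : ℝ} (hα : 0 < α) (h : (fun q => max ((δ - α • μ) q) 0) = δ) :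
    (∀ q, 0 ≤ δ q) ∧ (∀ q, 0 ≤ μ q) ∧ inner ℝ μ δ = 0 := by
  have hq : ∀ q, 0 ≤ δ q ∧ 0 ≤ μ q ∧ μ q * δ q = 0 := fun q =>
    complementary_of_max_sub_mul_eq hα (by simpa using congrFun h q)
  refine ⟨fun q => (hq q).1, fun q => (hq q).2.1, ?_⟩
  simp only [PiLp.inner_apply, RCLike.inner_apply, conj_trivial]
  exact Finset.sum_eq_zero fun q _ => (mul_comm _ _).trans (hq q).2.2

theorem stmt_3_general {n m p : ℕ}
    (A : Fin n → Matrix (Fin m) (Fin p) ℝ)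
    (d : EuclideanSpace ℝ (Fin n × Fin m))
    (L : Matrix (Fin n) (Fin n) ℝ)
    (α η γ : ℝ) (hα : 0 < α) (hη : 0 < η) (hγ : 0 < γ)
    -- the fixed point, with `gradF` the gradient of the stacked objective
    (xhat' xhat : EuclideanSpace ℝ (Fin n × Fin p))
    (yhat δhat lamhat : EuclideanSpace ℝ (Fin n × Fin m))
    (gradF : EuclideanSpace ℝ (Fin n × Fin p) → EuclideanSpace ℝ (Fin n × Fin p))
    (zhat : EuclideanSpace ℝ (Fin n × Fin m))
    (hzhat : zhat = Amul A xhat' + Lmul L yhat + δhat)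
    -- fixed-point conditions of the DanyRA updates with ω = 0:
    (hfix1 : gradF xhat' + ATmul A (zhat - d + lamhat) = 0)
    (hfix2 : Lmul L (zhat - d + lamhat) = 0)
    (hfix3 : (fun q => max ((δhat - α • (zhat - d + lamhat)) q) 0) = δhat)
    (hfix4 : zhat - d = η • Amul A (ATmul A lamhat + gradF xhat'))
    (hfix5mem : Amul A xhat =
      Amul A xhat - γ • (Amul A xhat + Lmul L yhat + δhat - d))
    (hfix5min : ∀ x : EuclideanSpace ℝ (Fin n × Fin p),
      Amul A x = Amul A xhat - γ • (Amul A xhat + Lmul L yhat + δhat - d) →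
      ‖xhat - xhat'‖ ≤ ‖x - xhat'‖) :
    xhat = xhat' ∧
    gradF xhat + ATmul A lamhat = 0 ∧
    Lmul L lamhat = 0 ∧
    (∀ q, 0 ≤ δhat q) ∧
    (∀ q, 0 ≤ lamhat q) ∧
    (inner ℝ lamhat δhat : ℝ) = 0 ∧
    Amul A xhat + Lmul L yhat + δhat - d = 0 := by
  have hdual : ATmul A lamhat + gradF xhat' = -ATmul A (zhat - d) := by
    rw [eq_neg_iff_add_eq_zero, ← hfix1, ATmul_add]
    abel
  have hzd : zhat - d = 0 :=
    eq_zero_of_eq_neg_smul_comp_adjoint (Amul A) (ATmul A) (inner_Amul_left A) hη.le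
      (by rw [← smul_neg, ← Amul_neg, ← hdual, hfix4])
  have hmult : zhat - d + lamhat = lamhat := by rw [hzd, zero_add]
  rw [hmult] at hfix1 hfix2 hfix3
  have hres : Amul A xhat + Lmul L yhat + δhat - d = 0 :=
    (smul_eq_zero.mp (sub_eq_self.mp hfix5mem.symm)).resolve_left hγ.ne'
  have hfeas' : Amul A xhat' = Amul A xhat - γ • (Amul A xhat + Lmul L yhat + δhat - d) := by
    have hres' : Amul A xhat' + Lmul L yhat + δhat - d = 0 := hzhat ▸ hzd
    rw [hres, smul_zero, sub_zero, ← sub_eq_zero]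
    calc Amul A xhat' - Amul A xhat
        = (Amul A xhat' + Lmul L yhat + δhat - d) - (Amul A xhat + Lmul L yhat + δhat - d) := by
          abel
      _ = 0 := by rw [hres', hres, sub_zero]
  have hxx : xhat = xhat' := by
    have := hfix5min xhat' hfeas'
    rwa [sub_self, norm_zero, norm_le_zero_iff, sub_eq_zero] at this
  obtain ⟨hδ, hlam, hinner⟩ := complementary_of_max_sub_smul_eq hα hfix3
  exact ⟨hxx, hxx ▸ hfix1, hfix2, hδ, hlam, hinner, hres⟩

/-- Proposition 2: with buffer `ω = 0`, any fixed point
`(x̂′, ŷ, δ̂, λ̂, x̂)` of the DanyRA updates (stepsizes `α, β, η, γ > 0`)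
satisfies `x̂ = x̂′` and the KKT conditions of the reformulated problem:
`∇f(x̂) + Aᵀλ̂ = 0`, `𝐋λ̂ = 0`, `δ̂ ⪰ 0`, `λ̂ ⪰ 0`, `λ̂ᵀδ̂ = 0`, and
`A x̂ + 𝐋 ŷ + δ̂ − d = 0`. -/
theorem stmt_3 {n m p : ℕ} (hn : 1 ≤ n) (hpm : m ≤ p)
    (f : Fin n → EuclideanSpace ℝ (Fin p) → ℝ)
    (hdiff : ∀ i, Differentiable ℝ (f i))
    (hconv : ∀ i, ConvexOn ℝ Set.univ (f i))
    (A : Fin n → Matrix (Fin m) (Fin p) ℝ)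
    (hArank : ∀ i, (A i).rank = m)
    (d : EuclideanSpace ℝ (Fin n × Fin m))
    (L : Matrix (Fin n) (Fin n) ℝ)
    (hLsym : L.IsSymm)
    (hLpsd : L.PosSemidef)
    (hLker : ∀ v : Fin n → ℝ, L.mulVec v = 0 ↔ ∃ c : ℝ, v = fun _ => c)
    (α β η γ : ℝ) (hα : 0 < α) (hβ : 0 < β) (hη : 0 < η) (hγ : 0 < γ)
    -- the fixed point, with `gradF` the gradient of the stacked objective
    (xhat' xhat : EuclideanSpace ℝ (Fin n × Fin p))
    (yhat δhat lamhat : EuclideanSpace ℝ (Fin n × Fin m))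
    (gradF : EuclideanSpace ℝ (Fin n × Fin p) → EuclideanSpace ℝ (Fin n × Fin p))
    (hgradF : gradF = gradient (stackF f))
    (zhat : EuclideanSpace ℝ (Fin n × Fin m))
    (hzhat : zhat = Amul A xhat' + Lmul L yhat + δhat)
    -- fixed-point conditions of the DanyRA updates with ω = 0:
    (hfix1 : gradF xhat' + ATmul A (zhat - d + lamhat) = 0)
    (hfix2 : Lmul L (zhat - d + lamhat) = 0)
    (hfix3 : (fun q => max ((δhat - α • (zhat - d + lamhat)) q) 0) = δhat)
    (hfix4 : zhat - d = η • Amul A (ATmul A lamhat + gradF xhat'))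
    (hfix5mem : Amul A xhat =
      Amul A xhat - γ • (Amul A xhat + Lmul L yhat + δhat - d))
    (hfix5min : ∀ x : EuclideanSpace ℝ (Fin n × Fin p),
      Amul A x = Amul A xhat - γ • (Amul A xhat + Lmul L yhat + δhat - d) →
      ‖xhat - xhat'‖ ≤ ‖x - xhat'‖) :
    xhat = xhat' ∧
    gradF xhat + ATmul A lamhat = 0 ∧
    Lmul L lamhat = 0 ∧
    (∀ q, 0 ≤ δhat q) ∧
    (∀ q, 0 ≤ lamhat q) ∧
    (inner ℝ lamhat δhat : ℝ) = 0 ∧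
    Amul A xhat + Lmul L yhat + δhat - d = 0 :=
  stmt_3_general A d L α η γ hα hη hγ xhat' xhat yhat δhat lamhat gradF zhat hzhat hfix1 hfix2 hfix3
    hfix4 hfix5mem hfix5min
end
end

section
/- (Aggregate contraction identity, key step of Theorem 1) Consider any sequences x_k ∈ ℝ^{np}, δ_k, y_k ∈ ℝ^{nm} such that for every k ≥ 0, A x_{k+1} = A x_k − γ(A x_k + 𝐋 y_{k+1} + δ_{k+1} − d) + (1−γ)(δ_k − δ_{k+1}) (the affine constraint of the DanyRA decision update), where γ ∈ (0,1). Then for all k ≥ 0, Σ_{i=1}^n (A_i x_{i,k+1} + δ_{i,k+1} − d_i) = (1−γ) · Σ_{i=1}^n (A_i x_{i,k} + δ_{i,k} − d_i) in ℝ^m. -/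
set_option autoImplicit false

open scoped BigOperators

noncomputable section

def blockSum {ι κ : Type*} [Fintype ι] (j : κ) : EuclideanSpace ℝ (ι × κ) →ₗ[ℝ] ℝ where
  toFun u := ∑ i, u (i, j)
  map_add' u v := by simp only [PiLp.add_apply, Finset.sum_add_distrib]
  map_smul' c u := by simp only [PiLp.smul_apply, smul_eq_mul, Finset.mul_sum, RingHom.id_apply]

@[simp]
theorem blockSum_apply {ι κ : Type*} [Fintype ι] (j : κ) (u : EuclideanSpace ℝ (ι × κ)) :
    blockSum j u = ∑ i, u (i, j) :=
  rfl

theorem blockSum_Lmul {n m : ℕ} {L : Matrix (Fin n) (Fin n) ℝ} (hLcol : ∀ j, ∑ i, L i j = 0)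
    (u : EuclideanSpace ℝ (Fin n × Fin m)) (j : Fin m) : blockSum j (Lmul L u) = 0 := by
  simp only [blockSum_apply, Lmul]
  rw [Finset.sum_comm]
  simp [← Finset.sum_mul, hLcol]

/-- In terms of the residual `A x + δ - d` the update is a contraction by `1 - γ` plus the
consensus term `𝐋 y`, which has zero block sum since the columns of `𝓛` sum to zero. -/
theorem residual_update {V : Type*} [AddCommGroup V] [Module ℝ V] {γ : ℝ}
    {a a' l δ δ' d : V} (h : a' = a - γ • (a + l + δ' - d) + (1 - γ) • (δ - δ')) :
    a' + δ' - d = (1 - γ) • (a + δ - d) - γ • l := by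
  rw [h]
  module

theorem stmt_6_general {n m p : ℕ}
    (A : Fin n → Matrix (Fin m) (Fin p) ℝ)
    (d : EuclideanSpace ℝ (Fin n × Fin m))
    (L : Matrix (Fin n) (Fin n) ℝ)
    (hLcol : ∀ j, ∑ i, L i j = 0)
    (γ : ℝ)
    (x : ℕ → EuclideanSpace ℝ (Fin n × Fin p))
    (y δ : ℕ → EuclideanSpace ℝ (Fin n × Fin m))
    (hrec : ∀ k : ℕ, Amul A (x (k + 1)) =
      Amul A (x k) - γ • (Amul A (x k) + Lmul L (y (k + 1)) + δ (k + 1) - d)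
        + (1 - γ) • (δ k - δ (k + 1))) :
    ∀ (k : ℕ) (j : Fin m),
      (∑ i : Fin n, (Amul A (x (k + 1)) (i, j) + δ (k + 1) (i, j) - d (i, j)))
        = (1 - γ) * ∑ i : Fin n, (Amul A (x k) (i, j) + δ k (i, j) - d (i, j)) := by
  intro k j
  change blockSum j (Amul A (x (k + 1)) + δ (k + 1) - d)
    = (1 - γ) * blockSum j (Amul A (x k) + δ k - d)
  rw [residual_update (hrec k), map_sub, map_smul, map_smul, blockSum_Lmul hLcol, smul_zero,
    sub_zero, smul_eq_mul]

/-- aggregate contraction identity: if the sequences satisfy the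
affine constraint of the DanyRA decision update
`A x_{k+1} = A x_k − γ(A x_k + 𝐋 y_{k+1} + δ_{k+1} − d) + (1−γ)(δ_k − δ_{k+1})`
with `γ ∈ (0,1)`, then for all `k`,
`∑ᵢ (Aᵢ x_{i,k+1} + δ_{i,k+1} − dᵢ) = (1−γ)·∑ᵢ (Aᵢ x_{i,k} + δ_{i,k} − dᵢ)`. -/
theorem stmt_6 {n m p : ℕ} (hn : 1 ≤ n)
    (A : Fin n → Matrix (Fin m) (Fin p) ℝ)
    (d : EuclideanSpace ℝ (Fin n × Fin m))
    (L : Matrix (Fin n) (Fin n) ℝ)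
    (hLsym : L.IsSymm)
    (hLrow : ∀ i, ∑ j, L i j = 0)
    (hLcol : ∀ j, ∑ i, L i j = 0)
    (γ : ℝ) (hγ0 : 0 < γ) (hγ1 : γ < 1)
    (x : ℕ → EuclideanSpace ℝ (Fin n × Fin p))
    (y δ : ℕ → EuclideanSpace ℝ (Fin n × Fin m))
    (hrec : ∀ k : ℕ, Amul A (x (k + 1)) =
      Amul A (x k) - γ • (Amul A (x k) + Lmul L (y (k + 1)) + δ (k + 1) - d)
        + (1 - γ) • (δ k - δ (k + 1))) :
    ∀ (k : ℕ) (j : Fin m),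
      (∑ i : Fin n, (Amul A (x (k + 1)) (i, j) + δ (k + 1) (i, j) - d (i, j)))
        = (1 - γ) * ∑ i : Fin n, (Amul A (x k) (i, j) + δ k (i, j) - d (i, j)) :=
  stmt_6_general A d L hLcol γ x y δ hrec
end
end

section
/- (Theorem 1, part iii) Let γ ∈ (0,1) and ω ≥ 0. Consider sequences x_k ∈ ℝ^{np}, δ_k, y_k ∈ ℝ^{nm} satisfying, for every k ≥ 0, A x_{k+1} = A x_k − γ(A x_k + 𝐋 y_{k+1} + δ_{k+1} − d) + (1−γ)(δ_k − δ_{k+1}), and δ_k ⪰ ω·1 for all k ≥ 1 (as is automatic for DanyRA's δ-update with buffer ω). If at some k₀ ≥ 1 one has Σ_{i=1}^n (A_i x_{i,k₀} + δ_{i,k₀} − d_i) ⪯ (nω/(1−γ))·1_m componentwise, then the coupled constraint remains satisfied thereafter: Σ_{i=1}^n A_i x_{i,k₀+t} ⪯ Σ_{i=1}^n d_i componentwise for all t ≥ 1. -/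
set_option autoImplicit false

open scoped BigOperators

/-!
Summing the update over the agents kills the Laplacian term, so the aggregate residual
`r_k = ∑ᵢ (Aᵢ x_{i,k} + δ_{i,k} − dᵢ)` obeys `r_{k+1} = (1 − γ) r_k`. Hence
`r_{k₀+t} ≤ (1 − γ)^{t-1} n ω ≤ n ω ≤ ∑ᵢ δ_{i,k₀+t}`, which is the claim after cancelling `δ`.
-/

noncomputable section

namespace DanyRA

variable {n m p : ℕ}

theorem sum_Lmul_eq_zero {L : Matrix (Fin n) (Fin n) ℝ} (hLcol : ∀ j, ∑ i, L i j = 0)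
    (u : EuclideanSpace ℝ (Fin n × Fin m)) (j : Fin m) : ∑ i, Lmul L u (i, j) = 0 := by
  simp only [Lmul, PiLp.toLp_apply]
  rw [Finset.sum_comm]
  exact Finset.sum_eq_zero fun l _ => by rw [← Finset.sum_mul, hLcol l, zero_mul]

def residual (A : Fin n → Matrix (Fin m) (Fin p) ℝ) (d : EuclideanSpace ℝ (Fin n × Fin m))
    (x : EuclideanSpace ℝ (Fin n × Fin p)) (δ : EuclideanSpace ℝ (Fin n × Fin m))
    (j : Fin m) : ℝ :=
  ∑ i, (Amul A x (i, j) + δ (i, j) - d (i, j))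

variable {A : Fin n → Matrix (Fin m) (Fin p) ℝ} {d : EuclideanSpace ℝ (Fin n × Fin m)}
  {L : Matrix (Fin n) (Fin n) ℝ} {γ : ℝ}

theorem residual_eq (x : EuclideanSpace ℝ (Fin n × Fin p))
    (δ : EuclideanSpace ℝ (Fin n × Fin m)) (j : Fin m) :
    residual A d x δ j = ∑ i, Amul A x (i, j) + ∑ i, δ (i, j) - ∑ i, d (i, j) := by
  rw [residual, Finset.sum_sub_distrib, Finset.sum_add_distrib]

theorem residual_step (hLcol : ∀ j, ∑ i, L i j = 0)
    {x x' : EuclideanSpace ℝ (Fin n × Fin p)} {y δ δ' : EuclideanSpace ℝ (Fin n × Fin m)}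
    (h : Amul A x' = Amul A x - γ • (Amul A x + Lmul L y + δ' - d) + (1 - γ) • (δ - δ'))
    (j : Fin m) :
    residual A d x' δ' j = (1 - γ) * residual A d x δ j := by
  have hcoord : ∀ i, Amul A x' (i, j) + δ' (i, j) - d (i, j)
      = (1 - γ) * (Amul A x (i, j) + δ (i, j) - d (i, j)) - γ * Lmul L y (i, j) := by
    intro i
    have hi := congrArg (fun v => v (i, j)) h
    simp only [PiLp.add_apply, PiLp.sub_apply, PiLp.smul_apply, smul_eq_mul] at hi
    rw [hi]
    ring
  rw [residual, Finset.sum_congr rfl fun i _ => hcoord i, Finset.sum_sub_distrib,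
    ← Finset.mul_sum, ← Finset.mul_sum, sum_Lmul_eq_zero hLcol, mul_zero, sub_zero, residual]

theorem residual_iterate (hLcol : ∀ j, ∑ i, L i j = 0)
    {x : ℕ → EuclideanSpace ℝ (Fin n × Fin p)} {y δ : ℕ → EuclideanSpace ℝ (Fin n × Fin m)}
    (hrec : ∀ k : ℕ, Amul A (x (k + 1)) =
      Amul A (x k) - γ • (Amul A (x k) + Lmul L (y (k + 1)) + δ (k + 1) - d)
        + (1 - γ) • (δ k - δ (k + 1)))
    (k t : ℕ) (j : Fin m) :
    residual A d (x (k + t)) (δ (k + t)) j = (1 - γ) ^ t * residual A d (x k) (δ k) j := by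
  induction t with
  | zero => simp
  | succ t ih => rw [← add_assoc, residual_step hLcol (hrec _), ih, pow_succ]; ring

end DanyRA

theorem pow_succ_mul_le_of_le_div {c s b : ℝ} (hc0 : 0 < c) (hc1 : c ≤ 1) (hb : 0 ≤ b)
    (hs : s ≤ b / c) (u : ℕ) : c ^ (u + 1) * s ≤ b :=
  calc c ^ (u + 1) * s ≤ c ^ (u + 1) * (b / c) := by gcongr
    _ = c ^ u * b := by field_simp; ring
    _ ≤ b := mul_le_of_le_one_left hb (pow_le_one₀ hc0.le hc1)

open DanyRA in
theorem stmt_7_general {n m p : ℕ}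
    (A : Fin n → Matrix (Fin m) (Fin p) ℝ)
    (d : EuclideanSpace ℝ (Fin n × Fin m))
    (L : Matrix (Fin n) (Fin n) ℝ)
    (hLcol : ∀ j, ∑ i, L i j = 0)
    (γ ω : ℝ) (hγ0 : 0 < γ) (hγ1 : γ < 1) (hω : 0 ≤ ω)
    (x : ℕ → EuclideanSpace ℝ (Fin n × Fin p))
    (y δ : ℕ → EuclideanSpace ℝ (Fin n × Fin m))
    (hrec : ∀ k : ℕ, Amul A (x (k + 1)) =
      Amul A (x k) - γ • (Amul A (x k) + Lmul L (y (k + 1)) + δ (k + 1) - d)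
        + (1 - γ) • (δ k - δ (k + 1)))
    (hδω : ∀ k : ℕ, 1 ≤ k → ∀ q, ω ≤ δ k q)
    (k₀ : ℕ)
    (hsmall : ∀ j : Fin m,
      (∑ i : Fin n, (Amul A (x k₀) (i, j) + δ k₀ (i, j) - d (i, j)))
        ≤ n * ω / (1 - γ)) :
    ∀ t : ℕ, 1 ≤ t → ∀ j : Fin m,
      (∑ i : Fin n, Amul A (x (k₀ + t)) (i, j)) ≤ ∑ i : Fin n, d (i, j) := by
  intro t ht j
  obtain ⟨u, rfl⟩ : ∃ u, t = u + 1 := ⟨t - 1, by omega⟩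
  have hres : residual A d (x (k₀ + (u + 1))) (δ (k₀ + (u + 1))) j ≤ n * ω := by
    rw [residual_iterate hLcol hrec]
    exact pow_succ_mul_le_of_le_div (by linarith) (by linarith) (by positivity) (hsmall j) u
  have hδ : (n : ℝ) * ω ≤ ∑ i, δ (k₀ + (u + 1)) (i, j) := by
    simpa using Finset.sum_le_sum fun i (_ : i ∈ Finset.univ) => hδω _ (by omega) (i, j)
  rw [residual_eq] at hres
  linarith

/-- Theorem 1, part iii: for `γ ∈ (0,1)`, `ω ≥ 0`, sequences
satisfying the DanyRA decision-update constraint and `δ_k ⪰ ω·1` for `k ≥ 1`,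
if `∑ᵢ (Aᵢ x_{i,k₀} + δ_{i,k₀} − dᵢ) ⪯ (nω/(1−γ))·1` at some `k₀ ≥ 1`, then
`∑ᵢ Aᵢ x_{i,k₀+t} ⪯ ∑ᵢ dᵢ` componentwise for all `t ≥ 1`. -/
theorem stmt_7 {n m p : ℕ} (hn : 1 ≤ n)
    (A : Fin n → Matrix (Fin m) (Fin p) ℝ)
    (d : EuclideanSpace ℝ (Fin n × Fin m))
    (L : Matrix (Fin n) (Fin n) ℝ)
    (hLsym : L.IsSymm)
    (hLrow : ∀ i, ∑ j, L i j = 0)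
    (hLcol : ∀ j, ∑ i, L i j = 0)
    (γ ω : ℝ) (hγ0 : 0 < γ) (hγ1 : γ < 1) (hω : 0 ≤ ω)
    (x : ℕ → EuclideanSpace ℝ (Fin n × Fin p))
    (y δ : ℕ → EuclideanSpace ℝ (Fin n × Fin m))
    (hrec : ∀ k : ℕ, Amul A (x (k + 1)) =
      Amul A (x k) - γ • (Amul A (x k) + Lmul L (y (k + 1)) + δ (k + 1) - d)
        + (1 - γ) • (δ k - δ (k + 1)))
    (hδω : ∀ k : ℕ, 1 ≤ k → ∀ q, ω ≤ δ k q)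
    (k₀ : ℕ) (hk₀ : 1 ≤ k₀)
    (hsmall : ∀ j : Fin m,
      (∑ i : Fin n, (Amul A (x k₀) (i, j) + δ k₀ (i, j) - d (i, j)))
        ≤ n * ω / (1 - γ)) :
    ∀ t : ℕ, 1 ≤ t → ∀ j : Fin m,
      (∑ i : Fin n, Amul A (x (k₀ + t)) (i, j)) ≤ ∑ i : Fin n, d (i, j) :=
  stmt_7_general A d L hLcol γ ω hγ0 hγ1 hω x y δ hrec hδω k₀ hsmall
end
end

section
/- (Theorem 3, part ii) Let γ ∈ (0,1) and consider sequences x_k ∈ ℝ^{np}, y_k ∈ ℝ^{nm} satisfying, for every k ≥ 0, A x_{k+1} = A x_k − γ(A x_k + 𝐋 y_{k+1} − d) (the affine constraint of Eq-DanyRA's decision update). Then for all k ≥ 0, Σ_{i=1}^n (A_i x_{i,k+1} − d_i) = (1−γ)·Σ_{i=1}^n (A_i x_{i,k} − d_i) in ℝ^m. Consequently, if the coupled equality constraint is violated at some k₀ ≥ 1 with violation C^vio = |Σ_{i=1}^n (A_i x_{i,k₀} − d_i)| (componentwise absolute value), then the violation decays linearly: |Σ_{i=1}^n (A_i x_{i,k₀+t}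 − d_i)| = (1−γ)^t C^vio ⪯ (1−γ)^t C^vio for all t ≥ 1, and in particular Σ_{i=1}^n (A_i x_{i,k₀+t} − d_i) ⪯ (1−γ)^t C^vio componentwise. -/
/-! The Laplacian term `𝐋 y` has zero block-sum, so summing the decision-update constraint over
the agents leaves `∑ᵢ (Aᵢ xᵢ − dᵢ)` multiplied by `1 − γ` at every step; iterating gives the exact
geometric decay, and `0 ≤ 1 − γ` lets the factor `(1 − γ)^t` pass through the absolute value. -/

set_option autoImplicit false

open scoped BigOperators

noncomputable section

theorem sum_Lmul_apply_eq_zero {n m : ℕ} {L : Matrix (Fin n) (Fin n) ℝ}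
    (hLcol : ∀ j, ∑ i, L i j = 0) (u : EuclideanSpace ℝ (Fin n × Fin m)) (j : Fin m) :
    ∑ i, Lmul L u (i, j) = 0 := by
  simp only [Lmul, PiLp.toLp_apply]
  rw [Finset.sum_comm]
  simp [← Finset.sum_mul, hLcol]

theorem sum_Amul_sub_eq_of_update {n m p : ℕ} {A : Fin n → Matrix (Fin m) (Fin p) ℝ}
    {L : Matrix (Fin n) (Fin n) ℝ} (hLcol : ∀ j, ∑ i, L i j = 0)
    {d : EuclideanSpace ℝ (Fin n × Fin m)} {γ : ℝ} {x x' : EuclideanSpace ℝ (Fin n × Fin p)}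
    {y : EuclideanSpace ℝ (Fin n × Fin m)}
    (hupd : Amul A x' = Amul A x - γ • (Amul A x + Lmul L y - d)) (j : Fin m) :
    ∑ i, (Amul A x' (i, j) - d (i, j)) = (1 - γ) * ∑ i, (Amul A x (i, j) - d (i, j)) := by
  have hcoord : ∀ i, Amul A x' (i, j) - d (i, j) =
      (1 - γ) * (Amul A x (i, j) - d (i, j)) - γ * Lmul L y (i, j) := fun i => by
    rw [hupd]
    simp only [PiLp.sub_apply, PiLp.smul_apply, PiLp.add_apply, smul_eq_mul]
    ring
  simp only [hcoord, Finset.sum_sub_distrib, ← Finset.mul_sum, sum_Lmul_apply_eq_zero hLcol,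
    mul_zero, sub_zero]

theorem eq_pow_mul_of_succ_eq_mul {M : Type*} [Monoid M] {r : ℕ → M} {c : M}
    (h : ∀ k, r (k + 1) = c * r k) (k₀ t : ℕ) : r (k₀ + t) = c ^ t * r k₀ := by
  induction t with
  | zero => simp
  | succ t ih => rw [← add_assoc, h, ih, pow_succ', mul_assoc]

theorem stmt_18_general {n m p : ℕ}
    (A : Fin n → Matrix (Fin m) (Fin p) ℝ)
    (d : EuclideanSpace ℝ (Fin n × Fin m))
    (L : Matrix (Fin n) (Fin n) ℝ)
    (hLcol : ∀ j, ∑ i, L i j = 0)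
    (γ : ℝ) (hγ1 : γ < 1)
    (x : ℕ → EuclideanSpace ℝ (Fin n × Fin p))
    (y : ℕ → EuclideanSpace ℝ (Fin n × Fin m))
    (hrec : ∀ k : ℕ, Amul A (x (k + 1)) =
      Amul A (x k) - γ • (Amul A (x k) + Lmul L (y (k + 1)) - d)) :
    (∀ (k : ℕ) (j : Fin m),
      (∑ i : Fin n, (Amul A (x (k + 1)) (i, j) - d (i, j)))
        = (1 - γ) * ∑ i : Fin n, (Amul A (x k) (i, j) - d (i, j))) ∧
    (∀ k₀ : ℕ, 1 ≤ k₀ → ∀ t : ℕ, 1 ≤ t → ∀ j : Fin m,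
      |∑ i : Fin n, (Amul A (x (k₀ + t)) (i, j) - d (i, j))|
        = (1 - γ) ^ t * |∑ i : Fin n, (Amul A (x k₀) (i, j) - d (i, j))| ∧
      (∑ i : Fin n, (Amul A (x (k₀ + t)) (i, j) - d (i, j)))
        ≤ (1 - γ) ^ t * |∑ i : Fin n, (Amul A (x k₀) (i, j) - d (i, j))|) := by
  have hstep : ∀ k j, ∑ i, (Amul A (x (k + 1)) (i, j) - d (i, j))
      = (1 - γ) * ∑ i, (Amul A (x k) (i, j) - d (i, j)) :=
    fun k => sum_Amul_sub_eq_of_update hLcol (hrec k)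
  refine ⟨hstep, fun k₀ _ t _ j => ?_⟩
  have hdecay : ∑ i, (Amul A (x (k₀ + t)) (i, j) - d (i, j))
      = (1 - γ) ^ t * ∑ i, (Amul A (x k₀) (i, j) - d (i, j)) :=
    eq_pow_mul_of_succ_eq_mul (r := fun k => ∑ i, (Amul A (x k) (i, j) - d (i, j)))
      (fun k => hstep k j) k₀ t
  have hfactor : 0 ≤ (1 - γ) ^ t := pow_nonneg (sub_nonneg.2 hγ1.le) t
  rw [hdecay, abs_mul, abs_of_nonneg hfactor]
  exact ⟨rfl, mul_le_mul_of_nonneg_left (le_abs_self _) hfactor⟩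

/-- Theorem 3, part ii: under the Eq-DanyRA decision-update
constraint `A x_{k+1} = A x_k − γ(A x_k + 𝐋 y_{k+1} − d)` with `γ ∈ (0,1)`, the
aggregate residual contracts exactly:
`∑ᵢ (Aᵢ x_{i,k+1} − dᵢ) = (1−γ)·∑ᵢ (Aᵢ x_{i,k} − dᵢ)`; consequently, for a
violation at `k₀ ≥ 1` with componentwise magnitude
`C^vio = |∑ᵢ (Aᵢ x_{i,k₀} − dᵢ)|`, one has
`|∑ᵢ (Aᵢ x_{i,k₀+t} − dᵢ)| = (1−γ)^t C^vio` and in particular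
`∑ᵢ (Aᵢ x_{i,k₀+t} − dᵢ) ⪯ (1−γ)^t C^vio` componentwise, for all `t ≥ 1`. -/
theorem stmt_18 {n m p : ℕ} (hn : 1 ≤ n)
    (A : Fin n → Matrix (Fin m) (Fin p) ℝ)
    (d : EuclideanSpace ℝ (Fin n × Fin m))
    (L : Matrix (Fin n) (Fin n) ℝ)
    (hLsym : L.IsSymm)
    (hLrow : ∀ i, ∑ j, L i j = 0)
    (hLcol : ∀ j, ∑ i, L i j = 0)
    (γ : ℝ) (hγ0 : 0 < γ) (hγ1 : γ < 1)
    (x : ℕ → EuclideanSpace ℝ (Fin n × Fin p))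
    (y : ℕ → EuclideanSpace ℝ (Fin n × Fin m))
    (hrec : ∀ k : ℕ, Amul A (x (k + 1)) =
      Amul A (x k) - γ • (Amul A (x k) + Lmul L (y (k + 1)) - d)) :
    (∀ (k : ℕ) (j : Fin m),
      (∑ i : Fin n, (Amul A (x (k + 1)) (i, j) - d (i, j)))
        = (1 - γ) * ∑ i : Fin n, (Amul A (x k) (i, j) - d (i, j))) ∧
    (∀ k₀ : ℕ, 1 ≤ k₀ → ∀ t : ℕ, 1 ≤ t → ∀ j : Fin m,
      |∑ i : Fin n, (Amul A (x (k₀ + t)) (i, j) - d (i, j))|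
        = (1 - γ) ^ t * |∑ i : Fin n, (Amul A (x k₀) (i, j) - d (i, j))| ∧
      (∑ i : Fin n, (Amul A (x (k₀ + t)) (i, j) - d (i, j)))
        ≤ (1 - γ) ^ t * |∑ i : Fin n, (Amul A (x k₀) (i, j) - d (i, j))|) :=
  stmt_18_general A d L hLcol γ hγ1 x y hrec
end
end
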